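/- arXiv:1901.08731 — 2 statements merged into one kernel-verified Lean document; each statement's English description precedes it below -/
import Mathlib

section
/- Combining backward and forward induction solves the primal-dual pair: let v and π be obtained by backward induction (v_{Ts} = min_a c_{Tsa} attained at π_{Ts}; v_{ts} = min_a (c_{tsa} + ∑_{s'} P_{sas'} v_{t+1,s'}) attained at π_{ts}), and let y be the flow induced by policy π via forward induction from divergence p. Then ∑_{t,s,a} c_{tsa} y_{tsa} = ∑_{t,s} p_{ts} v_{ts}; in particular, y minimizes the primal objective over primal-feasible flows and v maximizes the dual objective over dual-feasible potentials. -/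
open Finset

/-- Primal feasibility: nonnegative flow satisfying the Kolmogorov equations. -/
def PrimalFeasible (T S A : ℕ) (hT : 0 < T)
    (p : Fin T → Fin S → ℝ) (P : Fin S → Fin A → Fin S → ℝ)
    (y : Fin T → Fin S → Fin A → ℝ) : Prop :=
  (∀ t s a, 0 ≤ y t s a) ∧
  (∀ s, ∑ a, y ⟨0, hT⟩ s a = p ⟨0, hT⟩ s) ∧
  (∀ (t : ℕ) (ht : t + 1 < T) (s : Fin S),
    ∑ a, y ⟨t + 1, ht⟩ s a
      = p ⟨t + 1, ht⟩ s
        + ∑ s', ∑ a, P s' a s * y ⟨t, lt_trans (Nat.lt_succ_self t) ht⟩ s' a)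

/-- Dual feasibility: Bellman inequalities. -/
def DualFeasible (T S A : ℕ) (hT : 0 < T)
    (c : Fin T → Fin S → Fin A → ℝ) (P : Fin S → Fin A → Fin S → ℝ)
    (v : Fin T → Fin S → ℝ) : Prop :=
  (∀ (s : Fin S) (a : Fin A),
    v ⟨T - 1, Nat.sub_lt hT one_pos⟩ s ≤ c ⟨T - 1, Nat.sub_lt hT one_pos⟩ s a) ∧
  (∀ (t : ℕ) (ht : t + 1 < T) (s : Fin S) (a : Fin A),
    v ⟨t, lt_trans (Nat.lt_succ_self t) ht⟩ s
      ≤ c ⟨t, lt_trans (Nat.lt_succ_self t) ht⟩ s a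
        + ∑ s', P s a s' * v ⟨t + 1, ht⟩ s')

noncomputable def slack (T S A : ℕ) (c : Fin T → Fin S → Fin A → ℝ)
    (P : Fin S → Fin A → Fin S → ℝ) (v : Fin T → Fin S → ℝ)
    (t : Fin T) (s : Fin S) (a : Fin A) : ℝ :=
  c t s a - v t s +
    (if h : (t : ℕ) + 1 < T then ∑ s', P s a s' * v ⟨(t : ℕ) + 1, h⟩ s' else 0)

lemma key_identity (T S A : ℕ) (hT : 0 < T)
    (c : Fin T → Fin S → Fin A → ℝ) (p : Fin T → Fin S → ℝ)
    (P : Fin S → Fin A → Fin S → ℝ) (v : Fin T → Fin S → ℝ)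
    (y : Fin T → Fin S → Fin A → ℝ)
    (h0 : ∀ s, ∑ a, y ⟨0, hT⟩ s a = p ⟨0, hT⟩ s)
    (hK : ∀ (t : ℕ) (ht : t + 1 < T) (s : Fin S),
      ∑ a, y ⟨t + 1, ht⟩ s a
        = p ⟨t + 1, ht⟩ s
          + ∑ s', ∑ a, P s' a s * y ⟨t, lt_trans (Nat.lt_succ_self t) ht⟩ s' a) :
    ∑ t, ∑ s, ∑ a, c t s a * y t s a
      = ∑ t, ∑ s, p t s * v t s
        + ∑ t, ∑ s, ∑ a, y t s a * slack T S A c P v t s a := by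
  classical
  set G : Fin T → Fin S → Fin A → ℝ := fun t s a =>
    if h : (t : ℕ) + 1 < T then ∑ s', P s a s' * v ⟨(t : ℕ) + 1, h⟩ s' else 0 with hG
  -- expand slack sum
  have hsum : ∀ t s, ∑ a, y t s a * slack T S A c P v t s a
      = (∑ a, c t s a * y t s a) - (∑ a, y t s a) * v t s
        + ∑ a, y t s a * G t s a := by
    intro t s
    have h1 : ∀ a : Fin A, y t s a * slack T S A c P v t s a
        = c t s a * y t s a - y t s a * v t s + y t s a * G t s a := by
      intro a; simp only [slack, hG]; ring
    simp only [h1, Finset.sum_add_distrib, Finset.sum_sub_distrib, Finset.sum_mul]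
  -- the telescoping identity
  have E : ∑ t, ∑ s, (∑ a, y t s a) * v t s
      = ∑ t, ∑ s, p t s * v t s + ∑ t, ∑ s, ∑ a, y t s a * G t s a := by
    set F1 : ℕ → ℝ := fun n =>
      if h : n < T then ∑ s, (∑ a, y ⟨n, h⟩ s a) * v ⟨n, h⟩ s else 0 with hF1
    set F2 : ℕ → ℝ := fun n =>
      if h : n < T then ∑ s, p ⟨n, h⟩ s * v ⟨n, h⟩ s else 0 with hF2
    set F3 : ℕ → ℝ := fun n =>
      if h : n + 1 < T then
        ∑ s, ∑ a, y ⟨n, lt_trans (Nat.lt_succ_self n) h⟩ s a *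
          ∑ s', P s a s' * v ⟨n + 1, h⟩ s'
      else 0 with hF3
    have c1 : ∑ t : Fin T, ∑ s, (∑ a, y t s a) * v t s = ∑ n ∈ Finset.range T, F1 n := by
      rw [Finset.sum_range]
      refine Finset.sum_congr rfl fun t _ => ?_
      simp only [hF1]; rw [dif_pos t.isLt]
    have c2 : ∑ t : Fin T, ∑ s, p t s * v t s = ∑ n ∈ Finset.range T, F2 n := by
      rw [Finset.sum_range]
      refine Finset.sum_congr rfl fun t _ => ?_
      simp only [hF2]; rw [dif_pos t.isLt]
    have c3 : ∑ t : Fin T, ∑ s, ∑ a, y t s a * G t s a = ∑ n ∈ Finset.range T, F3 n := by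
      rw [Finset.sum_range]
      refine Finset.sum_congr rfl fun t _ => ?_
      by_cases h : (t : ℕ) + 1 < T
      · simp only [hF3]; rw [dif_pos h]
        refine Finset.sum_congr rfl fun s _ => Finset.sum_congr rfl fun a _ => ?_
        simp only [hG]; rw [dif_pos h]
      · simp only [hF3]; rw [dif_neg h]
        refine (Finset.sum_eq_zero fun s _ => Finset.sum_eq_zero fun a _ => ?_)
        simp only [hG]; rw [dif_neg h, mul_zero]
    rw [c1, c2, c3]
    obtain ⟨T', rfl⟩ : ∃ T', T = T' + 1 := ⟨T - 1, (Nat.succ_pred_eq_of_pos hT).symm⟩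
    rw [Finset.sum_range_succ' F1 T', Finset.sum_range_succ' F2 T',
      Finset.sum_range_succ F3 T']
    have hF30 : F3 T' = 0 := by simp only [hF3]; rw [dif_neg (by omega : ¬ (T' + 1 < T' + 1))]
    have h00 : F1 0 = F2 0 := by
      simp only [hF1, hF2]; rw [dif_pos hT, dif_pos hT]
      exact Finset.sum_congr rfl fun s _ => by rw [h0 s]
    have hstep : ∀ n ∈ Finset.range T', F1 (n + 1) = F2 (n + 1) + F3 n := by
      intro n hn
      have hn1 : n + 1 < T' + 1 := by
        simp only [Finset.mem_range] at hn; omega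
      simp only [hF1, hF2, hF3]; rw [dif_pos hn1, dif_pos hn1, dif_pos hn1]
      have swap : ∑ s, (∑ s', ∑ a, P s' a s *
            y ⟨n, lt_trans (Nat.lt_succ_self n) hn1⟩ s' a) * v ⟨n + 1, hn1⟩ s
          = ∑ s, ∑ a, y ⟨n, lt_trans (Nat.lt_succ_self n) hn1⟩ s a *
              ∑ s', P s a s' * v ⟨n + 1, hn1⟩ s' := by
        simp only [Finset.sum_mul, Finset.mul_sum]
        rw [Finset.sum_comm]
        refine Finset.sum_congr rfl fun s _ => ?_
        rw [Finset.sum_comm]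
        exact Finset.sum_congr rfl fun a _ => Finset.sum_congr rfl fun s' _ => by ring
      calc ∑ s, (∑ a, y ⟨n + 1, hn1⟩ s a) * v ⟨n + 1, hn1⟩ s
          = ∑ s, (p ⟨n + 1, hn1⟩ s + ∑ s', ∑ a, P s' a s *
              y ⟨n, lt_trans (Nat.lt_succ_self n) hn1⟩ s' a) * v ⟨n + 1, hn1⟩ s := by
            exact Finset.sum_congr rfl fun s _ => by rw [hK n hn1 s]
        _ = ∑ s, p ⟨n + 1, hn1⟩ s * v ⟨n + 1, hn1⟩ s
            + ∑ s, (∑ s', ∑ a, P s' a s *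
                y ⟨n, lt_trans (Nat.lt_succ_self n) hn1⟩ s' a) * v ⟨n + 1, hn1⟩ s := by
            simp only [add_mul, Finset.sum_add_distrib]
        _ = _ := by rw [swap]
    rw [Finset.sum_congr rfl hstep, Finset.sum_add_distrib, h00, hF30]
    ring
  have expand : ∑ t, ∑ s, ∑ a, y t s a * slack T S A c P v t s a
      = (∑ t, ∑ s, ∑ a, c t s a * y t s a)
        - (∑ t, ∑ s, (∑ a, y t s a) * v t s)
        + ∑ t, ∑ s, ∑ a, y t s a * G t s a := by
    simp only [hsum, Finset.sum_add_distrib, Finset.sum_sub_distrib]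
  rw [expand]
  linarith [E]

lemma slack_nonneg (T S A : ℕ) (hT : 0 < T)
    (c : Fin T → Fin S → Fin A → ℝ)
    (P : Fin S → Fin A → Fin S → ℝ) (v : Fin T → Fin S → ℝ)
    (hvT : ∀ (s : Fin S) (a : Fin A),
      v ⟨T - 1, Nat.sub_lt hT one_pos⟩ s ≤ c ⟨T - 1, Nat.sub_lt hT one_pos⟩ s a)
    (hvB : ∀ (t : ℕ) (ht : t + 1 < T) (s : Fin S) (a : Fin A),
      v ⟨t, lt_trans (Nat.lt_succ_self t) ht⟩ s
        ≤ c ⟨t, lt_trans (Nat.lt_succ_self t) ht⟩ s a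
          + ∑ s', P s a s' * v ⟨t + 1, ht⟩ s')
    (t : Fin T) (s : Fin S) (a : Fin A) :
    0 ≤ slack T S A c P v t s a := by
  by_cases h : (t : ℕ) + 1 < T
  · have := hvB (t : ℕ) h s a
    simp only [slack, dif_pos h]
    have ht' : (⟨(t : ℕ), lt_trans (Nat.lt_succ_self _) h⟩ : Fin T) = t := rfl
    rw [ht'] at this
    linarith
  · have h2 := t.isLt
    have ht' : t = ⟨T - 1, Nat.sub_lt hT one_pos⟩ := Fin.ext (by simp; omega)
    have := hvT s a
    simp only [slack, dif_neg h]
    rw [ht']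
    linarith

lemma slack_pi_zero (T S A : ℕ) (hT : 0 < T)
    (c : Fin T → Fin S → Fin A → ℝ)
    (P : Fin S → Fin A → Fin S → ℝ) (v : Fin T → Fin S → ℝ)
    (π : Fin T → Fin S → Fin A)
    (hπT : ∀ s : Fin S,
      v ⟨T - 1, Nat.sub_lt hT one_pos⟩ s
        = c ⟨T - 1, Nat.sub_lt hT one_pos⟩ s (π ⟨T - 1, Nat.sub_lt hT one_pos⟩ s))
    (hπB : ∀ (t : ℕ) (ht : t + 1 < T) (s : Fin S),
      v ⟨t, lt_trans (Nat.lt_succ_self t) ht⟩ s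
        = c ⟨t, lt_trans (Nat.lt_succ_self t) ht⟩ s
            (π ⟨t, lt_trans (Nat.lt_succ_self t) ht⟩ s)
          + ∑ s', P s (π ⟨t, lt_trans (Nat.lt_succ_self t) ht⟩ s) s' * v ⟨t + 1, ht⟩ s')
    (t : Fin T) (s : Fin S) :
    slack T S A c P v t s (π t s) = 0 := by
  by_cases h : (t : ℕ) + 1 < T
  · have := hπB (t : ℕ) h s
    simp only [slack, dif_pos h]
    have ht' : (⟨(t : ℕ), lt_trans (Nat.lt_succ_self _) h⟩ : Fin T) = t := rfl
    rw [ht'] at this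
    linarith
  · have h2 := t.isLt
    have ht' : t = ⟨T - 1, Nat.sub_lt hT one_pos⟩ := Fin.ext (by simp; omega)
    simp only [slack, dif_neg h]
    rw [ht', ← hπT s]
    ring

lemma m_nonneg (T S A : ℕ) (hT : 0 < T)
    (p : Fin T → Fin S → ℝ) (hp : ∀ t s, 0 ≤ p t s)
    (P : Fin S → Fin A → Fin S → ℝ) (hP : ∀ s a s', 0 ≤ P s a s')
    (π : Fin T → Fin S → Fin A)
    (m : Fin T → Fin S → ℝ) (y : Fin T → Fin S → Fin A → ℝ)
    (hy : ∀ t s a, y t s a = if a = π t s then m t s else 0)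
    (hm1 : ∀ s, m ⟨0, hT⟩ s = p ⟨0, hT⟩ s)
    (hmK : ∀ (t : ℕ) (ht : t + 1 < T) (s : Fin S),
      m ⟨t + 1, ht⟩ s
        = p ⟨t + 1, ht⟩ s
          + ∑ s', ∑ a, P s' a s * y ⟨t, lt_trans (Nat.lt_succ_self t) ht⟩ s' a) :
    ∀ (n : ℕ) (hn : n < T) (s : Fin S), 0 ≤ m ⟨n, hn⟩ s := by
  intro n
  induction n with
  | zero =>
    intro hn s
    rw [show (⟨0, hn⟩ : Fin T) = ⟨0, hT⟩ from rfl, hm1 s]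
    exact hp _ s
  | succ k ih =>
    intro hn s
    rw [hmK k hn s]
    have h1 : 0 ≤ ∑ s', ∑ a, P s' a s *
        y ⟨k, lt_trans (Nat.lt_succ_self k) hn⟩ s' a := by
      refine Finset.sum_nonneg fun s' _ => Finset.sum_nonneg fun a _ => ?_
      rw [hy]
      by_cases hcase : a = π ⟨k, lt_trans (Nat.lt_succ_self k) hn⟩ s'
      · rw [if_pos hcase]
        exact mul_nonneg (hP _ _ _) (ih (lt_trans (Nat.lt_succ_self k) hn) s')
      · rw [if_neg hcase, mul_zero]
    have := hp ⟨k + 1, hn⟩ s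
    linarith

theorem backward_forward_solves_primal_dual
    (T S A : ℕ) (hT : 0 < T) (hS : 0 < S) (hA : 0 < A)
    (c : Fin T → Fin S → Fin A → ℝ)
    (p : Fin T → Fin S → ℝ) (hp : ∀ t s, 0 ≤ p t s)
    (P : Fin S → Fin A → Fin S → ℝ)
    (hP : ∀ s a s', 0 ≤ P s a s')
    (hP1 : ∀ s a, ∑ s', P s a s' = 1)
    (v : Fin T → Fin S → ℝ) (π : Fin T → Fin S → Fin A)
    -- backward induction: v is the Bellman value, attained at the policy π
    (hvT : ∀ (s : Fin S) (a : Fin A),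
      v ⟨T - 1, Nat.sub_lt hT one_pos⟩ s ≤ c ⟨T - 1, Nat.sub_lt hT one_pos⟩ s a)
    (hπT : ∀ s : Fin S,
      v ⟨T - 1, Nat.sub_lt hT one_pos⟩ s
        = c ⟨T - 1, Nat.sub_lt hT one_pos⟩ s (π ⟨T - 1, Nat.sub_lt hT one_pos⟩ s))
    (hvB : ∀ (t : ℕ) (ht : t + 1 < T) (s : Fin S) (a : Fin A),
      v ⟨t, lt_trans (Nat.lt_succ_self t) ht⟩ s
        ≤ c ⟨t, lt_trans (Nat.lt_succ_self t) ht⟩ s a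
          + ∑ s', P s a s' * v ⟨t + 1, ht⟩ s')
    (hπB : ∀ (t : ℕ) (ht : t + 1 < T) (s : Fin S),
      v ⟨t, lt_trans (Nat.lt_succ_self t) ht⟩ s
        = c ⟨t, lt_trans (Nat.lt_succ_self t) ht⟩ s
            (π ⟨t, lt_trans (Nat.lt_succ_self t) ht⟩ s)
          + ∑ s', P s (π ⟨t, lt_trans (Nat.lt_succ_self t) ht⟩ s) s'
              * v ⟨t + 1, ht⟩ s')
    -- forward induction: y is the flow induced by the policy π
    (m : Fin T → Fin S → ℝ) (y : Fin T → Fin S → Fin A → ℝ)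
    (hy : ∀ t s a, y t s a = if a = π t s then m t s else 0)
    (hm1 : ∀ s, m ⟨0, hT⟩ s = p ⟨0, hT⟩ s)
    (hmK : ∀ (t : ℕ) (ht : t + 1 < T) (s : Fin S),
      m ⟨t + 1, ht⟩ s
        = p ⟨t + 1, ht⟩ s
          + ∑ s', ∑ a, P s' a s * y ⟨t, lt_trans (Nat.lt_succ_self t) ht⟩ s' a) :
    (∑ t, ∑ s, ∑ a, c t s a * y t s a = ∑ t, ∑ s, p t s * v t s) ∧
    (∀ y', PrimalFeasible T S A hT p P y' →
      ∑ t, ∑ s, ∑ a, c t s a * y t s a ≤ ∑ t, ∑ s, ∑ a, c t s a * y' t s a) ∧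
    (∀ v', DualFeasible T S A hT c P v' →
      ∑ t, ∑ s, p t s * v' t s ≤ ∑ t, ∑ s, p t s * v t s) := by
  classical
  have hy0 : ∀ t s a, 0 ≤ y t s a := by
    intro t s a
    rw [hy]
    by_cases hcase : a = π t s
    · rw [if_pos hcase]
      exact m_nonneg T S A hT p hp P hP π m y hy hm1 hmK (t : ℕ) t.isLt s
    · rw [if_neg hcase]
  have hsum_a : ∀ t s, ∑ a, y t s a = m t s := by
    intro t s
    simp [hy]
  have h0 : ∀ s, ∑ a, y ⟨0, hT⟩ s a = p ⟨0, hT⟩ s := fun s => by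
    rw [hsum_a, hm1]
  have hKy : ∀ (t : ℕ) (ht : t + 1 < T) (s : Fin S),
      ∑ a, y ⟨t + 1, ht⟩ s a
        = p ⟨t + 1, ht⟩ s
          + ∑ s', ∑ a, P s' a s * y ⟨t, lt_trans (Nat.lt_succ_self t) ht⟩ s' a :=
    fun t ht s => by rw [hsum_a, hmK]
  have keyv := key_identity T S A hT c p P v y h0 hKy
  have hzero : ∑ t, ∑ s, ∑ a, y t s a * slack T S A c P v t s a = 0 := by
    refine Finset.sum_eq_zero fun t _ => Finset.sum_eq_zero fun s _ =>
      Finset.sum_eq_zero fun a _ => ?_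
    by_cases hcase : a = π t s
    · rw [hcase, slack_pi_zero T S A hT c P v π hπT hπB t s, mul_zero]
    · rw [hy, if_neg hcase, zero_mul]
  have hEq : ∑ t, ∑ s, ∑ a, c t s a * y t s a = ∑ t, ∑ s, p t s * v t s := by
    rw [keyv, hzero, add_zero]
  refine ⟨hEq, ?_, ?_⟩
  · intro y' hy'
    obtain ⟨hy'0, h0', hK'⟩ := hy'
    have hk' := key_identity T S A hT c p P v y' h0' hK'
    have hnn : 0 ≤ ∑ t, ∑ s, ∑ a, y' t s a * slack T S A c P v t s a :=
      Finset.sum_nonneg fun t _ => Finset.sum_nonneg fun s _ =>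
        Finset.sum_nonneg fun a _ =>
          mul_nonneg (hy'0 t s a) (slack_nonneg T S A hT c P v hvT hvB t s a)
    rw [hEq]
    linarith
  · intro v' hv'
    obtain ⟨hv'T, hv'B⟩ := hv'
    have hk' := key_identity T S A hT c p P v' y h0 hKy
    have hnn : 0 ≤ ∑ t, ∑ s, ∑ a, y t s a * slack T S A c P v' t s a :=
      Finset.sum_nonneg fun t _ => Finset.sum_nonneg fun s _ =>
        Finset.sum_nonneg fun a _ =>
          mul_nonneg (hy0 t s a) (slack_nonneg T S A hT c P v' hv'T hv'B t s a)
    linarith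
end

section
/- Multi-commodity KKT sufficiency (Theorem 4 converse direction): suppose for each commodity τ ∈ C ⊆ [T], y^{(τ)} ≥ 0 satisfies its own Kolmogorov equations with divergence p^{(τ)} over horizon τ, and there exist potentials v^{(τ)} and tensions u with u_{tsa} = φ_{tsa}(∑_{τ ≥ t} y^{(τ)}_{tsa}), v^{(τ)}_{τs} = min_a u_{τsa}, v^{(τ)}_{ts} = min_a(u_{tsa} + ∑_{s'}P_{sas'}v^{(τ)}_{t+1,s'}) for t < τ, and y^{(τ)}_{tsa} > 0 implies a attains the respective minimum. Then the family (y^{(τ)})_{τ∈C} minimizes the aggregate objective ∑_{t,s,a} ∫_0^{∑_{τ≥t} y^{(τ)}_{tsa}} φ_{tsa}(α)dα over all families of feasible commodity flows. -/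
open Finset

lemma grad_ineq (φ : ℝ → ℝ) (hc : Continuous φ) (hm : Monotone φ) (a b : ℝ) :
    φ a * (b - a) ≤ ∫ x in a..b, φ x := by
  rcases le_total a b with h | h
  · have h1 : (∫ x in a..b, φ a) ≤ ∫ x in a..b, φ x :=
      intervalIntegral.integral_mono_on h (intervalIntegrable_const)
        (hc.intervalIntegrable a b) (fun x hx => hm hx.1)
    simpa [intervalIntegral.integral_const, smul_eq_mul, mul_comm] using h1
  · have h1 : (∫ x in b..a, φ x) ≤ ∫ x in b..a, φ a :=
      intervalIntegral.integral_mono_on h (hc.intervalIntegrable b a)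
        (intervalIntegrable_const) (fun x hx => hm hx.2)
    rw [intervalIntegral.integral_symm]
    rw [intervalIntegral.integral_const, smul_eq_mul] at h1
    nlinarith

lemma grad_ineq' (φ : ℝ → ℝ) (hc : Continuous φ) (hm : Monotone φ) (a b : ℝ) :
    (∫ x in (0:ℝ)..a, φ x) + φ a * (b - a) ≤ ∫ x in (0:ℝ)..b, φ x := by
  have ha : IntervalIntegrable φ MeasureTheory.volume 0 a := hc.intervalIntegrable 0 a
  have hb : IntervalIntegrable φ MeasureTheory.volume a b := hc.intervalIntegrable a b
  have h := intervalIntegral.integral_add_adjacent_intervals ha hb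
  have h2 := grad_ineq φ hc hm a b
  linarith

def liftN {T : ℕ} {α : Type*} [Zero α] (f : Fin T → α) : ℕ → α :=
  fun n => if h : n < T then f ⟨n, h⟩ else 0

lemma liftN_lt {T : ℕ} {α : Type*} [Zero α] (f : Fin T → α) {n : ℕ} (h : n < T) :
    liftN f n = f ⟨n, h⟩ := dif_pos h

lemma fin_sum_le (T : ℕ) (τ : Fin T) (g : Fin T → ℝ) :
    (∑ t : Fin T, if t ≤ τ then g t else 0)
      = ∑ n ∈ Finset.range (τ.val + 1), liftN g n := by
  have h1 : (∑ t : Fin T, if t ≤ τ then g t else 0)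
      = ∑ n ∈ Finset.range T, (if n ≤ τ.val then liftN g n else 0) := by
    rw [← Fin.sum_univ_eq_sum_range (fun n => if n ≤ τ.val then liftN g n else 0) T]
    refine Finset.sum_congr rfl fun t _ => ?_
    rw [liftN_lt g t.isLt]
    rcases le_or_gt t τ with hle | hlt
    · rw [if_pos hle, if_pos (Fin.le_def.mp hle)]
    · rw [if_neg (not_le.mpr hlt), if_neg (not_le.mpr (Fin.lt_def.mp hlt))]
  rw [h1]
  rw [← Finset.sum_subset (Finset.range_subset_range.mpr (Nat.succ_le_of_lt τ.isLt))
    (fun n _ hn2 => if_neg (fun hle => hn2 (Finset.mem_range.mpr (Nat.lt_succ_of_le hle))))]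
  exact Finset.sum_congr rfl fun n hn =>
    if_pos (Nat.lt_succ_iff.mp (Finset.mem_range.mp hn))

lemma commodity_bound (S A : ℕ) (P : Fin S → Fin A → Fin S → ℝ) (m : ℕ)
    (V : ℕ → Fin S → ℝ) (U : ℕ → Fin S → Fin A → ℝ)
    (Y : ℕ → Fin S → Fin A → ℝ) (Q : ℕ → Fin S → ℝ)
    (hKol0 : ∀ s, ∑ a, Y 0 s a = Q 0 s)
    (hKol : ∀ t, t < m → ∀ s, ∑ a, Y (t+1) s a
      = Q (t+1) s + ∑ s', ∑ a, P s' a s * Y t s' a)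
    (hkey : ∀ t, t < m → ∀ s a, V t s * Y t s a
      ≤ (U t s a + ∑ s', P s a s' * V (t+1) s') * Y t s a)
    (hkeyT : ∀ s a, V m s * Y m s a ≤ U m s a * Y m s a) :
    ∑ t ∈ Finset.range (m+1), ∑ s, V t s * Q t s
      ≤ ∑ t ∈ Finset.range (m+1), ∑ s, ∑ a, U t s a * Y t s a := by
  have claim : ∀ k, k ≤ m →
      ∑ t ∈ Finset.range (k+1), ∑ s, V t s * Q t s
        ≤ (∑ t ∈ Finset.range k, ∑ s, ∑ a, U t s a * Y t s a)
          + ∑ s, V k s * ∑ a, Y k s a := by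
    intro k
    induction k with
    | zero => intro _; simp [hKol0]
    | succ k ih =>
      intro hk1
      have hk : k < m := hk1
      have ih' := ih (le_of_lt hk)
      have step2 : ∑ s, V k s * ∑ a, Y k s a
          ≤ ∑ s, ∑ a, (U k s a + ∑ s', P s a s' * V (k+1) s') * Y k s a := by
        rw [show (∑ s, V k s * ∑ a, Y k s a) = ∑ s, ∑ a, V k s * Y k s a by
          exact Finset.sum_congr rfl fun s _ => Finset.mul_sum ..]
        exact Finset.sum_le_sum fun s _ => Finset.sum_le_sum fun a _ => hkey k hk s a
      have expand : ∑ s, ∑ a, (U k s a + ∑ s', P s a s' * V (k+1) s') * Y k s a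
          = (∑ s, ∑ a, U k s a * Y k s a)
            + ∑ s', V (k+1) s' * ∑ s, ∑ a, P s a s' * Y k s a := by
        simp only [add_mul, Finset.sum_add_distrib]
        congr 1
        have h1 : ∀ (s : Fin S) (a : Fin A),
            (∑ s', P s a s' * V (k+1) s') * Y k s a
              = ∑ s', V (k+1) s' * (P s a s' * Y k s a) := by
          intro s a
          rw [Finset.sum_mul]
          exact Finset.sum_congr rfl fun s' _ => by ring
        simp only [h1, Finset.mul_sum]
        calc ∑ s, ∑ a, ∑ s', V (k+1) s' * (P s a s' * Y k s a)
            = ∑ s, ∑ s', ∑ a, V (k+1) s' * (P s a s' * Y k s a) :=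
              Finset.sum_congr rfl fun s _ => Finset.sum_comm
          _ = ∑ s', ∑ s, ∑ a, V (k+1) s' * (P s a s' * Y k s a) := Finset.sum_comm
      have mass : ∑ s, V (k+1) s * ∑ a, Y (k+1) s a
          = (∑ s, V (k+1) s * Q (k+1) s)
            + ∑ s, V (k+1) s * ∑ s', ∑ a, P s' a s * Y k s' a := by
        simp only [hKol k hk, mul_add, Finset.sum_add_distrib]
      have swapnames : ∑ s, V (k+1) s * ∑ s', ∑ a, P s' a s * Y k s' a
          = ∑ s', V (k+1) s' * ∑ s, ∑ a, P s a s' * Y k s a := rfl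
      rw [Finset.sum_range_succ]
      rw [Finset.sum_range_succ (fun t => ∑ s, ∑ a, U t s a * Y t s a)]
      rw [mass, swapnames]
      linarith
  have h := claim m le_rfl
  have last : ∑ s, V m s * ∑ a, Y m s a ≤ ∑ s, ∑ a, U m s a * Y m s a := by
    rw [show (∑ s, V m s * ∑ a, Y m s a) = ∑ s, ∑ a, V m s * Y m s a by
      exact Finset.sum_congr rfl fun s _ => Finset.mul_sum ..]
    exact Finset.sum_le_sum fun s _ => Finset.sum_le_sum fun a _ => hkeyT s a
  rw [Finset.sum_range_succ (fun t => ∑ s, ∑ a, U t s a * Y t s a)]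
  linarith
/-- Feasibility of the flow of commodity `τ` (which exits at layer `τ`) with
divergence `q`, over the horizon `[0, τ]`. -/
def CommodityFeasible (T S A : ℕ) (hT : 0 < T)
    (P : Fin S → Fin A → Fin S → ℝ) (τ : Fin T)
    (q : Fin T → Fin S → ℝ) (yc : Fin T → Fin S → Fin A → ℝ) : Prop :=
  (∀ t : Fin T, t ≤ τ → ∀ s a, 0 ≤ yc t s a) ∧
  (∀ s, ∑ a, yc ⟨0, hT⟩ s a = q ⟨0, hT⟩ s) ∧
  (∀ (t : ℕ) (ht : t < τ.val) (s : Fin S),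
    ∑ a, yc ⟨t + 1, lt_of_le_of_lt (Nat.succ_le_of_lt ht) τ.isLt⟩ s a
      = q ⟨t + 1, lt_of_le_of_lt (Nat.succ_le_of_lt ht) τ.isLt⟩ s
        + ∑ s', ∑ a, P s' a s * yc ⟨t, lt_trans ht τ.isLt⟩ s' a)

/-- Aggregate flow over all commodities still present at layer `t`. -/
def AggFlow (T S A : ℕ) (C : Finset (Fin T))
    (y : Fin T → Fin T → Fin S → Fin A → ℝ) : Fin T → Fin S → Fin A → ℝ :=
  fun t s a => ∑ τ ∈ C.filter (fun τ => t ≤ τ), y τ t s a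

theorem multicommodity_kkt_sufficiency
    (T S A : ℕ) (hT : 0 < T) (hS : 0 < S) (hA : 0 < A)
    (P : Fin S → Fin A → Fin S → ℝ)
    (hP : ∀ s a s', 0 ≤ P s a s')
    (hP1 : ∀ s a, ∑ s', P s a s' = 1)
    (C : Finset (Fin T)) (hC : C.Nonempty)
    (p : Fin T → Fin T → Fin S → ℝ) (hp : ∀ τ t s, 0 ≤ p τ t s)
    (φ : Fin T → Fin S → Fin A → ℝ → ℝ)
    (hφc : ∀ t s a, Continuous (φ t s a)) (hφm : ∀ t s a, Monotone (φ t s a))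
    (y : Fin T → Fin T → Fin S → Fin A → ℝ)
    (hfeas : ∀ τ ∈ C, CommodityFeasible T S A hT P τ (p τ) (y τ))
    (u : Fin T → Fin S → Fin A → ℝ)
    (hu : ∀ t s a, u t s a = φ t s a (AggFlow T S A C y t s a))
    (v : Fin T → Fin T → Fin S → ℝ)
    (hvT : ∀ τ ∈ C, ∀ s : Fin S,
      IsLeast (Set.range fun a => u τ s a) (v τ τ s))
    (hvB : ∀ τ ∈ C, ∀ (t : ℕ) (ht : t < τ.val) (s : Fin S),
      IsLeast
        (Set.range fun a =>
          u ⟨t, lt_trans ht τ.isLt⟩ s a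
            + ∑ s', P s a s'
                * v τ ⟨t + 1, lt_of_le_of_lt (Nat.succ_le_of_lt ht) τ.isLt⟩ s')
        (v τ ⟨t, lt_trans ht τ.isLt⟩ s))
    (hcsT : ∀ τ ∈ C, ∀ (s : Fin S) (a : Fin A),
      0 < y τ τ s a → v τ τ s = u τ s a)
    (hcs : ∀ τ ∈ C, ∀ (t : ℕ) (ht : t < τ.val) (s : Fin S) (a : Fin A),
      0 < y τ ⟨t, lt_trans ht τ.isLt⟩ s a →
        v τ ⟨t, lt_trans ht τ.isLt⟩ s
          = u ⟨t, lt_trans ht τ.isLt⟩ s a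
            + ∑ s', P s a s'
                * v τ ⟨t + 1, lt_of_le_of_lt (Nat.succ_le_of_lt ht) τ.isLt⟩ s') :
    ∀ y' : Fin T → Fin T → Fin S → Fin A → ℝ,
      (∀ τ ∈ C, CommodityFeasible T S A hT P τ (p τ) (y' τ)) →
      (∑ t, ∑ s, ∑ a, ∫ α in (0:ℝ)..(AggFlow T S A C y t s a), φ t s a α)
        ≤ ∑ t, ∑ s, ∑ a, ∫ α in (0:ℝ)..(AggFlow T S A C y' t s a), φ t s a α := by
  intro y' hfeas'
  -- rearrangement of the linearized objective per commodity
  have rearr : ∀ w : Fin T → Fin T → Fin S → Fin A → ℝ,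
      (∑ t, ∑ s, ∑ a, u t s a * AggFlow T S A C w t s a)
        = ∑ τ ∈ C, ∑ n ∈ Finset.range (τ.val + 1), ∑ s, ∑ a,
            liftN u n s a * liftN (w τ) n s a := by
    intro w
    have step0 : ∀ (t : Fin T) (s : Fin S) (a : Fin A),
        u t s a * AggFlow T S A C w t s a
          = ∑ τ ∈ C.filter (fun τ => t ≤ τ), u t s a * w τ t s a :=
      fun t s a => Finset.mul_sum ..
    simp only [step0]
    have step1 : ∀ t : Fin T,
        (∑ s, ∑ a, ∑ τ ∈ C.filter (fun τ => t ≤ τ), u t s a * w τ t s a)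
          = ∑ τ ∈ C.filter (fun τ => t ≤ τ), ∑ s, ∑ a, u t s a * w τ t s a := by
      intro t
      calc (∑ s, ∑ a, ∑ τ ∈ C.filter (fun τ => t ≤ τ), u t s a * w τ t s a)
          = ∑ s, ∑ τ ∈ C.filter (fun τ => t ≤ τ), ∑ a, u t s a * w τ t s a :=
            Finset.sum_congr rfl fun s _ => Finset.sum_comm
        _ = _ := Finset.sum_comm
    simp only [step1]
    have step2 : ∀ t : Fin T,
        (∑ τ ∈ C.filter (fun τ => t ≤ τ), ∑ s, ∑ a, u t s a * w τ t s a)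
          = ∑ τ ∈ C, if t ≤ τ then ∑ s, ∑ a, u t s a * w τ t s a else 0 :=
      fun t => Finset.sum_filter _ _
    simp only [step2]
    rw [Finset.sum_comm]
    refine Finset.sum_congr rfl fun τ hτ => ?_
    rw [fin_sum_le T τ (fun t => ∑ s, ∑ a, u t s a * w τ t s a)]
    refine Finset.sum_congr rfl fun n hn => ?_
    have hnT : n < T := lt_of_le_of_lt (Nat.lt_succ_iff.mp (Finset.mem_range.mp hn)) τ.isLt
    rw [liftN_lt _ hnT]
    refine Finset.sum_congr rfl fun s _ => Finset.sum_congr rfl fun a _ => ?_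
    rw [liftN_lt u hnT, liftN_lt (w τ) hnT]
  -- lower bound for any feasible commodity flow
  have bound1 : ∀ τ ∈ C, ∀ w : Fin T → Fin S → Fin A → ℝ,
      CommodityFeasible T S A hT P τ (p τ) w →
      (∑ n ∈ Finset.range (τ.val + 1), ∑ s, liftN (v τ) n s * liftN (p τ) n s)
        ≤ ∑ n ∈ Finset.range (τ.val + 1), ∑ s, ∑ a, liftN u n s a * liftN w n s a := by
    intro τ hτ w hw
    apply commodity_bound S A P τ.val (liftN (v τ)) (liftN u) (liftN w) (liftN (p τ))
    · intro s
      rw [liftN_lt w hT, liftN_lt (p τ) hT]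
      exact hw.2.1 s
    · intro t ht s
      have h1 : t < T := lt_trans ht τ.isLt
      have h2 : t + 1 < T := lt_of_le_of_lt (Nat.succ_le_of_lt ht) τ.isLt
      rw [liftN_lt w h2, liftN_lt (p τ) h2, liftN_lt w h1]
      exact hw.2.2 t ht s
    · intro t ht s a
      have h1 : t < T := lt_trans ht τ.isLt
      have h2 : t + 1 < T := lt_of_le_of_lt (Nat.succ_le_of_lt ht) τ.isLt
      rw [liftN_lt (v τ) h1, liftN_lt u h1, liftN_lt w h1]
      have hy : 0 ≤ w ⟨t, h1⟩ s a := hw.1 ⟨t, h1⟩ ht.le s a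
      have hco : v τ ⟨t, h1⟩ s
          ≤ u ⟨t, h1⟩ s a + ∑ s', P s a s' * liftN (v τ) (t+1) s' := by
        rw [liftN_lt (v τ) h2]
        exact (hvB τ hτ t ht s).2 ⟨a, rfl⟩
      exact mul_le_mul_of_nonneg_right hco hy
    · intro s a
      rw [liftN_lt (v τ) τ.isLt, liftN_lt u τ.isLt, liftN_lt w τ.isLt]
      have hy : 0 ≤ w ⟨τ.val, τ.isLt⟩ s a := hw.1 ⟨τ.val, τ.isLt⟩ le_rfl s a
      exact mul_le_mul_of_nonneg_right ((hvT τ hτ s).2 ⟨a, rfl⟩) hy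
  -- upper bound for the optimal flow (via complementary slackness)
  have bound2 : ∀ τ ∈ C,
      (∑ n ∈ Finset.range (τ.val + 1), ∑ s, ∑ a, liftN u n s a * liftN (y τ) n s a)
        ≤ ∑ n ∈ Finset.range (τ.val + 1), ∑ s, liftN (v τ) n s * liftN (p τ) n s := by
    intro τ hτ
    have h := commodity_bound S A P τ.val (fun n s => -(liftN (v τ) n s))
      (fun n s a => -(liftN u n s a)) (liftN (y τ)) (liftN (p τ))
      (fun s => by
        rw [liftN_lt (y τ) hT, liftN_lt (p τ) hT]
        exact (hfeas τ hτ).2.1 s)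
      (fun t ht s => by
        have h1 : t < T := lt_trans ht τ.isLt
        have h2 : t + 1 < T := lt_of_le_of_lt (Nat.succ_le_of_lt ht) τ.isLt
        rw [liftN_lt (y τ) h2, liftN_lt (p τ) h2, liftN_lt (y τ) h1]
        exact (hfeas τ hτ).2.2 t ht s)
      (fun t ht s a => by
        have h1 : t < T := lt_trans ht τ.isLt
        have h2 : t + 1 < T := lt_of_le_of_lt (Nat.succ_le_of_lt ht) τ.isLt
        rw [liftN_lt (v τ) h1, liftN_lt u h1, liftN_lt (y τ) h1]
        have hsum : ∑ s', P s a s' * -(liftN (v τ) (t+1) s')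
            = -∑ s', P s a s' * v τ ⟨t+1, h2⟩ s' := by
          rw [liftN_lt (v τ) h2]
          simp [mul_neg]
        rw [hsum]
        have hy : 0 ≤ y τ ⟨t, h1⟩ s a := (hfeas τ hτ).1 ⟨t, h1⟩ ht.le s a
        rcases hy.eq_or_lt with h0 | h0
        · rw [← h0]; ring_nf; exact le_rfl
        · have heq := hcs τ hτ t ht s a h0
          rw [heq]
          exact le_of_eq (by ring))
      (fun s a => by
        rw [liftN_lt (v τ) τ.isLt, liftN_lt u τ.isLt, liftN_lt (y τ) τ.isLt]
        have hy : 0 ≤ y τ ⟨τ.val, τ.isLt⟩ s a := (hfeas τ hτ).1 ⟨τ.val, τ.isLt⟩ le_rfl s a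
        rcases hy.eq_or_lt with h0 | h0
        · rw [← h0]; ring_nf; exact le_rfl
        · have heq := hcsT τ hτ s a h0
          rw [show v τ ⟨τ.val, τ.isLt⟩ s = u τ s a from heq])
    simp only [neg_mul, Finset.sum_neg_distrib] at h
    linarith
  have main : (∑ t, ∑ s, ∑ a, u t s a * AggFlow T S A C y t s a)
      ≤ ∑ t, ∑ s, ∑ a, u t s a * AggFlow T S A C y' t s a := by
    rw [rearr y, rearr y']
    exact Finset.sum_le_sum fun τ hτ =>
      le_trans (bound2 τ hτ) (bound1 τ hτ (y' τ) (hfeas' τ hτ))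
  have grad : ∀ (t : Fin T) (s : Fin S) (a : Fin A),
      (∫ α in (0:ℝ)..(AggFlow T S A C y t s a), φ t s a α)
        + u t s a * (AggFlow T S A C y' t s a - AggFlow T S A C y t s a)
        ≤ ∫ α in (0:ℝ)..(AggFlow T S A C y' t s a), φ t s a α := by
    intro t s a
    rw [hu t s a]
    exact grad_ineq' (φ t s a) (hφc t s a) (hφm t s a) _ _
  have h1 : (∑ t, ∑ s, ∑ a, ((∫ α in (0:ℝ)..(AggFlow T S A C y t s a), φ t s a α)
      + u t s a * (AggFlow T S A C y' t s a - AggFlow T S A C y t s a)))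
      ≤ ∑ t, ∑ s, ∑ a, ∫ α in (0:ℝ)..(AggFlow T S A C y' t s a), φ t s a α :=
    Finset.sum_le_sum fun t _ => Finset.sum_le_sum fun s _ =>
      Finset.sum_le_sum fun a _ => grad t s a
  simp only [Finset.sum_add_distrib, mul_sub, Finset.sum_sub_distrib] at h1
  linarith
end
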